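/- Let Y ~ N(θ,1) be truncated to |Y| ≥ c with c > 0, and suppose the observed value is x = c (the boundary). Then the conditional MLE θ̂ solving c = θ + (φ(c-θ) - φ(-c-θ))/Q_c(θ) satisfies θ̂ < c; i.e., the conditional MLE strictly shrinks boundary observations toward zero. -/
import Mathlib


open MeasureTheory Set

noncomputable def phi (x : ℝ) : ℝ := (Real.sqrt (2 * Real.pi))⁻¹ * Real.exp (-x ^ 2 / 2)

noncomputable def Phi (x : ℝ) : ℝ := ∫ t in Iic x, phi t

/-- `Q_c(θ) = Φ(θ-c) + Φ(-θ-c) = P(|N(θ,1)| ≥ c)`. -/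
noncomputable def Qc (c θ : ℝ) : ℝ := Phi (θ - c) + Phi (-θ - c)

lemma phi_pos (x : ℝ) : 0 < phi x := by
  unfold phi
  have h : 0 < Real.sqrt (2 * Real.pi) :=
    Real.sqrt_pos.mpr (by positivity)
  positivity

lemma phi_integrable : Integrable phi := by
  have h : Integrable (fun x : ℝ => Real.exp (-(1/2) * x ^ 2)) :=
    integrable_exp_neg_mul_sq (by norm_num)
  have h2 := h.const_mul (Real.sqrt (2 * Real.pi))⁻¹
  refine h2.congr ?_
  filter_upwards with x
  unfold phi
  ring_nf

lemma Phi_pos (x : ℝ) : 0 < Phi x := by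
  unfold Phi
  rw [setIntegral_pos_iff_support_of_nonneg_ae]
  · have : (Function.support phi) = Set.univ := by
      ext y; simp [Function.mem_support, (phi_pos y).ne']
    rw [this, Set.univ_inter]
    simp [Real.volume_Iic]
  · filter_upwards with y using (phi_pos y).le
  · exact phi_integrable.integrableOn

/-- if the observed value equals the threshold `c`, the
conditional MLE `θ̂`, which solves `c = θ̂ + (φ(c-θ̂) - φ(-c-θ̂))/Q_c(θ̂)`,
satisfies `θ̂ < c`: boundary observations are strictly shrunk toward zero. -/
theorem conditional_mle_shrinks_boundary (c : ℝ) (hc : 0 < c) (θhat : ℝ)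
    (hsol : c = θhat + (phi (c - θhat) - phi (-c - θhat)) / Qc c θhat) :
    θhat < c := by
  by_contra h
  push_neg at h
  have hnum : 0 < phi (c - θhat) - phi (-c - θhat) := by
    unfold phi
    have hk : 0 < (Real.sqrt (2 * Real.pi))⁻¹ := by
      have : 0 < Real.sqrt (2 * Real.pi) := Real.sqrt_pos.mpr (by positivity)
      positivity
    have hexp : Real.exp (-(-c - θhat) ^ 2 / 2) < Real.exp (-(c - θhat) ^ 2 / 2) := by
      apply Real.exp_lt_exp.mpr
      nlinarith
    nlinarith
  have hden : 0 < Qc c θhat := add_pos (Phi_pos _) (Phi_pos _)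
  have : 0 < (phi (c - θhat) - phi (-c - θhat)) / Qc c θhat := div_pos hnum hden
  linarith
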